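/- Let p = 4m+1 be prime with m ≥ 1 and let δ₁, δ₂ ∈ {1, −1}. Then det[(j+k / p) + (j−k / p) + δ₁·(j²+δ₂k² / p)]_{0≤j,k≤2m} ≡ δ₁^{2m+1} · det[(j²+δ₂k² / p)]_{0≤j,k≤2m} (mod p), where both determinants are of integer matrices indexed by 0 ≤ j, k ≤ 2m. -/

import Mathlib

/-!
Modulo `p` the Legendre symbol `(t / p)` is `t ^ 2m`, so both matrices become matrices
`(f (j, k))` of binary forms of degree `4m` in which only even powers of `j` and `k` occur.
Such a matrix factors as `P C Q` with `P = (j ^ 2a)` and `Q = (k ^ 2(2m - b))`. For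
`(x² + δ₂ y²) ^ 2m` the middle matrix `C` is diagonal, while for `(x + y) ^ 2m + (x - y) ^ 2m`
only the even binomial terms `x ^ 2t y ^ 2(m - t)` survive and `C` lives on the `m`-th
superdiagonal, strictly above the diagonal as `m ≥ 1`. So the middle matrix of the first
determinant is upper triangular with `δ₁` times the diagonal of the second, which accounts for
the factor `δ₁ ^ (2m + 1)`.
-/

open Matrix BigOperators Finset

theorem Finset.sum_range_two_mul_add_one_of_odd {M : Type*} [AddCommMonoid M] {f : ℕ → M}
    (hf : ∀ k, Odd k → f k = 0) (m : ℕ) :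
    ∑ k ∈ range (2 * m + 1), f k = ∑ t ∈ range (m + 1), f (2 * t) := by
  induction m with
  | zero => simp
  | succ m ih =>
    rw [show 2 * (m + 1) + 1 = 2 * m + 1 + 1 + 1 by ring, sum_range_succ, sum_range_succ, ih,
      hf _ (odd_two_mul_add_one m), add_zero, sum_range_succ (fun t => f (2 * t)) (m + 1)]
    rfl

theorem add_pow_two_mul_add_sub_pow_two_mul {R : Type*} [CommRing R] (x y : R) (m : ℕ) :
    (x + y) ^ (2 * m) + (x - y) ^ (2 * m) =
      ∑ t ∈ range (m + 1),
        2 * ((2 * m).choose (2 * t) : R) * x ^ (2 * t) * y ^ (2 * (m - t)) := by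
  rw [add_pow, sub_pow, ← sum_add_distrib, sum_range_two_mul_add_one_of_odd]
  · refine sum_congr rfl fun t _ => ?_
    have hsign : (-1 : R) ^ (2 * t + 2 * m) = 1 := by
      rw [← mul_add, pow_mul, neg_one_sq, one_pow]
    rw [hsign, show 2 * m - 2 * t = 2 * (m - t) by omega]
    ring
  · intro k hk
    rw [(hk.add_even (even_two_mul m)).neg_one_pow]
    ring

section EvenBinaryForms

variable {R : Type*} [CommRing R] {m : ℕ} (v : Fin (2 * m + 1) → R)

def evenPowLeft : Matrix (Fin (2 * m + 1)) (Fin (2 * m + 1)) R :=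
  of fun j a => v j ^ (2 * (a : ℕ))

def evenPowRight : Matrix (Fin (2 * m + 1)) (Fin (2 * m + 1)) R :=
  of fun b k => v k ^ (2 * (2 * m - b))

variable (R m) in
def shiftedEvenBinom : Matrix (Fin (2 * m + 1)) (Fin (2 * m + 1)) R :=
  of fun a b => if (b : ℕ) = a + m then 2 * ((2 * m).choose (2 * a) : R) else 0

theorem of_sq_add_mul_sq_pow_eq (e : R) :
    of (fun j k => (v j ^ 2 + e * v k ^ 2) ^ (2 * m)) =
      evenPowLeft v *
        diagonal (fun a : Fin (2 * m + 1) => ((2 * m).choose a : R) * e ^ (2 * m - a)) *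
          evenPowRight v := by
  ext j k
  rw [mul_apply, of_apply, add_pow, ← Fin.sum_univ_eq_sum_range]
  refine sum_congr rfl fun a _ => ?_
  simp only [mul_diagonal, evenPowLeft, evenPowRight, of_apply, mul_pow, pow_mul]
  ring

theorem shiftedEvenBinom_mul_evenPowRight_apply (a k : Fin (2 * m + 1)) :
    (shiftedEvenBinom R m * evenPowRight v) a k =
      2 * ((2 * m).choose (2 * a) : R) * v k ^ (2 * (m - a)) := by
  simp only [mul_apply, shiftedEvenBinom, evenPowRight, of_apply, ite_mul, zero_mul]
  rw [Fin.sum_univ_eq_sum_range (fun b => if b = a + m then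
    2 * ((2 * m).choose (2 * a) : R) * v k ^ (2 * (2 * m - b)) else 0), sum_ite_eq']
  split_ifs with h
  · rw [show 2 * m - (a + m) = m - a by omega]
  · rw [Nat.choose_eq_zero_of_lt (by rw [mem_range] at h; omega)]
    simp

theorem of_add_pow_add_sub_pow_eq :
    of (fun j k => (v j + v k) ^ (2 * m) + (v j - v k) ^ (2 * m)) =
      evenPowLeft v * shiftedEvenBinom R m * evenPowRight v := by
  ext j k
  rw [Matrix.mul_assoc, mul_apply, of_apply, add_pow_two_mul_add_sub_pow_two_mul]
  simp only [shiftedEvenBinom_mul_evenPowRight_apply, evenPowLeft, of_apply]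
  rw [Fin.sum_univ_eq_sum_range (fun a => v j ^ (2 * a) *
    (2 * ((2 * m).choose (2 * a) : R) * v k ^ (2 * (m - a))))]
  rw [← sum_subset (range_subset_range.2 (by omega : m + 1 ≤ 2 * m + 1))]
  · exact sum_congr rfl fun a _ => by ring
  · intro a _ ha
    rw [Nat.choose_eq_zero_of_lt (by rw [mem_range] at ha; omega)]
    simp

theorem isUpperTriangular_shiftedEvenBinom_add_smul_diagonal (hm : 0 < m) (d : R)
    (w : Fin (2 * m + 1) → R) :
    (shiftedEvenBinom R m + d • diagonal w).IsUpperTriangular := by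
  intro a b hba
  have hba : (b : ℕ) < a := hba
  simp [shiftedEvenBinom, diagonal_apply_ne w (ne_of_gt hba), show (b : ℕ) ≠ a + m by omega]

theorem det_of_add_pow_add_sub_pow_add_mul (hm : 0 < m) (d e : R) :
    (of fun j k => (v j + v k) ^ (2 * m) + (v j - v k) ^ (2 * m) +
        d * (v j ^ 2 + e * v k ^ 2) ^ (2 * m)).det =
      d ^ (2 * m + 1) * (of fun j k => (v j ^ 2 + e * v k ^ 2) ^ (2 * m)).det := by
  have hsplit : (of fun j k => (v j + v k) ^ (2 * m) + (v j - v k) ^ (2 * m) +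
        d * (v j ^ 2 + e * v k ^ 2) ^ (2 * m)) =
      of (fun j k => (v j + v k) ^ (2 * m) + (v j - v k) ^ (2 * m)) +
        d • of (fun j k => (v j ^ 2 + e * v k ^ 2) ^ (2 * m)) := by
    ext; simp
  rw [hsplit, of_add_pow_add_sub_pow_eq, of_sq_add_mul_sq_pow_eq, ← Matrix.smul_mul,
    ← Matrix.mul_smul, ← Matrix.add_mul, ← Matrix.mul_add, det_mul, det_mul, det_mul, det_mul,
    det_of_isUpperTriangular (isUpperTriangular_shiftedEvenBinom_add_smul_diagonal hm _ _),
    det_diagonal]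
  simp only [shiftedEvenBinom, Matrix.add_apply, of_apply, Nat.left_eq_add, hm.ne', ↓reduceIte,
    Matrix.smul_apply, diagonal_apply_eq, smul_eq_mul, zero_add, prod_mul_distrib, prod_const,
    card_univ, Fintype.card_fin]
  ring

end EvenBinaryForms

theorem stmt_18_general (m : ℕ) (hm : 1 ≤ m) (p : ℕ) (hpm : p = 4 * m + 1) [Fact p.Prime]
    (δ₁ δ₂ : ℤ) :
    (Matrix.of fun j k : Fin (2 * m + 1) =>
        legendreSym p (((j : ℕ) : ℤ) + ((k : ℕ) : ℤ))
          + legendreSym p (((j : ℕ) : ℤ) - ((k : ℕ) : ℤ))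
          + δ₁ * legendreSym p (((j : ℕ) : ℤ) ^ 2 + δ₂ * ((k : ℕ) : ℤ) ^ 2)).det
      ≡ δ₁ ^ (2 * m + 1)
          * (Matrix.of fun j k : Fin (2 * m + 1) =>
              legendreSym p (((j : ℕ) : ℤ) ^ 2 + δ₂ * ((k : ℕ) : ℤ) ^ 2)).det
        [ZMOD (p : ℤ)] := by
  have hp : p / 2 = 2 * m := by omega
  rw [← ZMod.intCast_eq_intCast_iff, Int.cast_mul, Int.cast_pow, Int.cast_det, Int.cast_det]
  convert det_of_add_pow_add_sub_pow_add_mul (fun j => ((j : ℕ) : ZMod p)) hm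
    (δ₁ : ZMod p) (δ₂ : ZMod p) using 3 <;>
  · ext j k
    simp [legendreSym.eq_pow, hp]

/-- The two-antidiagonal observation: the full determinant is congruent to
`δ₁^{2m+1} · T(δ₂, p)` modulo `p`. -/
theorem stmt_18 (m : ℕ) (hm : 1 ≤ m) (p : ℕ) (hpm : p = 4 * m + 1) [Fact p.Prime]
    (δ₁ δ₂ : ℤ) (hδ₁ : δ₁ = 1 ∨ δ₁ = -1) (hδ₂ : δ₂ = 1 ∨ δ₂ = -1) :
    (Matrix.of fun j k : Fin (2 * m + 1) =>
        legendreSym p (((j : ℕ) : ℤ) + ((k : ℕ) : ℤ))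
          + legendreSym p (((j : ℕ) : ℤ) - ((k : ℕ) : ℤ))
          + δ₁ * legendreSym p (((j : ℕ) : ℤ) ^ 2 + δ₂ * ((k : ℕ) : ℤ) ^ 2)).det
      ≡ δ₁ ^ (2 * m + 1)
          * (Matrix.of fun j k : Fin (2 * m + 1) =>
              legendreSym p (((j : ℕ) : ℤ) ^ 2 + δ₂ * ((k : ℕ) : ℤ) ^ 2)).det
        [ZMOD (p : ℤ)] :=
  stmt_18_general m hm p hpm δ₁ δ₂
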